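/- arXiv:2303.03133 — 6 statements merged into one kernel-verified Lean document; each statement's English description precedes it below -/
import Mathlib

section
/- The function x : [0,T] → ℝ² defined by x(t) = M(T−t)·M(T)⁻¹·[1,0]ᵀ for t ∈ [0,T) and x(T) = 0, where M(τ) is the 2×2 matrix with rows (τ³ sin(1/τ), τ³ cos(1/τ)) and (τ² sin(1/τ) + τ cos(1/τ), τ² cos(1/τ) − τ sin(1/τ)), is continuous at T but does not have bounded variation on [0,T]. -/
/-
Write `(M T)⁻¹ e₁ = r (cos φ, sin φ)` with `r > 0`. Then, with `τ = T - t`,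
`x t = r (τ³ sin (1/τ + φ), τ² sin (1/τ + φ) + τ cos (1/τ + φ))`, which is `O(τ)`: this gives
continuity at `T`. At `τₙ = 1 / (nπ - φ)` the second coordinate equals `(-1)ⁿ r τₙ`, so consecutive
jumps along these points are at least `r τₙ`, and `∑ τₙ` diverges like the harmonic series.
-/

open Set MeasureTheory Filter Matrix Real

noncomputable def M (τ : ℝ) : Matrix (Fin 2) (Fin 2) ℝ :=
  !![τ^3 * Real.sin (1/τ), τ^3 * Real.cos (1/τ);
     τ^2 * Real.sin (1/τ) + τ * Real.cos (1/τ), τ^2 * Real.cos (1/τ) - τ * Real.sin (1/τ)]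

theorem BoundedVariationOn.summable_dist {α E : Type*} [LinearOrder α] [PseudoMetricSpace E]
    {f : α → E} {s : Set α} (hf : BoundedVariationOn f s) {u : ℕ → α} (hu : Monotone u)
    (hus : ∀ i, u i ∈ s) : Summable fun i => dist (f (u (i + 1))) (f (u i)) := by
  refine summable_of_sum_range_le (c := (eVariationOn f s).toReal) (fun _ => dist_nonneg)
    fun n => ?_
  rw [← ENNReal.ofReal_le_iff_le_toReal hf, ENNReal.ofReal_sum_of_nonneg fun _ _ => dist_nonneg]
  simpa only [← edist_dist] using eVariationOn.sum_le (f := f) (n := n) hu hus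

theorem exists_pos_smul_cos_sin (c : Fin 2 → ℝ) (hc : c ≠ 0) :
    ∃ r : ℝ, 0 < r ∧ ∃ φ, -π < φ ∧ c = r • ![cos φ, sin φ] := by
  set z : ℂ := ⟨c 0, c 1⟩
  have hz : z ≠ 0 := fun h => hc <| by
    ext i; fin_cases i
    · exact congrArg Complex.re h
    · exact congrArg Complex.im h
  refine ⟨‖z‖, norm_pos_iff.mpr hz, z.arg, Complex.neg_pi_lt_arg z, ?_⟩
  ext i; fin_cases i
  · simp [Complex.norm_mul_cos_arg, z]
  · simp [Complex.norm_mul_sin_arg, z]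

theorem M_det (τ : ℝ) : (M τ).det = -τ ^ 4 := by
  rw [M, det_fin_two_of]
  linear_combination (-τ ^ 4) * sin_sq_add_cos_sq (1 / τ)

theorem M_mulVec_cos_sin (τ φ : ℝ) :
    M τ *ᵥ ![cos φ, sin φ]
      = ![τ ^ 3 * sin (1 / τ + φ), τ ^ 2 * sin (1 / τ + φ) + τ * cos (1 / τ + φ)] := by
  ext i; fin_cases i <;>
  · simp [M, mulVec, dotProduct, Fin.sum_univ_two, sin_add, cos_add]; ring

theorem norm_M_mulVec_cos_sin_le {τ : ℝ} (hτ : 0 ≤ τ) (φ : ℝ) :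
    ‖M τ *ᵥ ![cos φ, sin φ]‖ ≤ τ ^ 3 + τ ^ 2 + τ := by
  have hs := abs_sin_le_one (1 / τ + φ)
  have hc := abs_cos_le_one (1 / τ + φ)
  rw [M_mulVec_cos_sin, pi_norm_le_iff_of_nonneg (by positivity)]
  intro i; fin_cases i
  · simp only [Fin.zero_eta, Matrix.cons_val_zero, Real.norm_eq_abs, abs_mul, abs_pow,
      abs_of_nonneg hτ]
    nlinarith [pow_nonneg hτ 3]
  · simp only [Fin.mk_one, Matrix.cons_val_one, Real.norm_eq_abs]
    calc _ ≤ |τ ^ 2 * sin (1 / τ + φ)| + |τ * cos (1 / τ + φ)| := abs_add_le _ _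
      _ ≤ τ ^ 2 + τ := by
        rw [abs_mul, abs_mul, abs_pow, abs_of_nonneg hτ]
        nlinarith [pow_nonneg hτ 2]
      _ ≤ _ := by nlinarith [pow_nonneg hτ 3]

theorem M_mulVec_cos_sin_one_div (n : ℕ) (φ : ℝ) :
    (M (1 / (n * π - φ)) *ᵥ ![cos φ, sin φ]) 1 = (-1) ^ n / (n * π - φ) := by
  simp only [M_mulVec_cos_sin, one_div_one_div, sub_add_cancel, sin_nat_mul_pi, cos_nat_mul_pi,
    Matrix.cons_val_one, Matrix.cons_val_zero]
  ring

theorem continuousWithinAt_of_eq_smul_M_mulVec {T r φ : ℝ} {x : ℝ → Fin 2 → ℝ}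
    (hx : ∀ t < T, x t = r • (M (T - t) *ᵥ ![cos φ, sin φ])) (hxT : x T = 0) :
    ContinuousWithinAt x (Iic T) T := by
  rw [ContinuousWithinAt, hxT]
  refine squeeze_zero_norm' (a := fun t => |r| * ((T - t) ^ 3 + (T - t) ^ 2 + (T - t))) ?_ ?_
  · filter_upwards [self_mem_nhdsWithin] with t (ht : t ≤ T)
    rcases ht.lt_or_eq with ht | rfl
    · rw [hx t ht, norm_smul, Real.norm_eq_abs]
      exact mul_le_mul_of_nonneg_left (norm_M_mulVec_cos_sin_le (sub_nonneg.2 ht.le) φ)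
        (abs_nonneg r)
    · simp [hxT]
  · exact ((by fun_prop : Continuous fun t => |r| * ((T - t) ^ 3 + (T - t) ^ 2 + (T - t))).tendsto'
      T 0 (by simp)).mono_left nhdsWithin_le_nhds

theorem not_boundedVariationOn_of_eq_smul_M_mulVec {T r φ : ℝ} {x : ℝ → Fin 2 → ℝ}
    (hT : 0 < T) (hr : 0 < r) (hφ : -π < φ)
    (hx : ∀ t < T, x t = r • (M (T - t) *ᵥ ![cos φ, sin φ])) :
    ¬ BoundedVariationOn x (Icc 0 T) := by
  intro hbv
  obtain ⟨N, hN⟩ := exists_nat_ge (1 / T + φ)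
  set σ : ℕ → ℝ := fun k => ((k + N : ℕ) : ℝ) * π - φ
  have hσT : ∀ k, 1 / T ≤ σ k := fun k => by
    simp only [σ]; push_cast; nlinarith [pi_gt_three, (k.cast_nonneg : (0 : ℝ) ≤ k)]
  have hσ_pos : ∀ k, 0 < σ k := fun k => (by positivity : (0 : ℝ) < 1 / T).trans_le (hσT k)
  have hσ_le : ∀ k, σ k ≤ π * ((k + (N + 1) : ℕ) : ℝ) := fun k => by
    simp only [σ]; push_cast; linarith
  set t : ℕ → ℝ := fun k => T - 1 / σ k
  have ht_mono : Monotone t := monotone_nat_of_le_succ fun k => by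
    refine sub_le_sub_left (one_div_le_one_div_of_le (hσ_pos k) ?_) T
    simp only [σ]; push_cast; linarith [pi_pos]
  have ht_mem : ∀ k, t k ∈ Icc 0 T := fun k =>
    ⟨sub_nonneg.2 ((one_div_le (hσ_pos k) hT).2 (hσT k)),
      sub_le_self T (one_div_pos.2 (hσ_pos k)).le⟩
  have hxt : ∀ k, x (t k) 1 = r * ((-1) ^ (k + N) / σ k) := fun k => by
    rw [hx _ (sub_lt_self T (one_div_pos.2 (hσ_pos k))), sub_sub_cancel, Pi.smul_apply,
      M_mulVec_cos_sin_one_div, smul_eq_mul]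
  have hdist : ∀ k, r / (π * ((k + (N + 1) : ℕ) : ℝ)) ≤ dist (x (t (k + 1))) (x (t k)) := by
    intro k
    have hjump : x (t (k + 1)) 1 - x (t k) 1 = -(-1) ^ (k + N) * (r / σ (k + 1) + r / σ k) := by
      rw [hxt, hxt, show k + 1 + N = k + N + 1 by ring, pow_succ]; ring
    have hpos_next : 0 < r / σ (k + 1) := div_pos hr (hσ_pos (k + 1))
    calc r / (π * ((k + (N + 1) : ℕ) : ℝ)) ≤ r / σ k :=
          div_le_div_of_nonneg_left hr.le (hσ_pos k) (hσ_le k)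
      _ ≤ r / σ (k + 1) + r / σ k := le_add_of_nonneg_left hpos_next.le
      _ = |x (t (k + 1)) 1 - x (t k) 1| := by
          rw [hjump, abs_mul, abs_neg, abs_pow, abs_neg, abs_one, one_pow, one_mul,
            abs_of_pos (add_pos hpos_next (div_pos hr (hσ_pos k)))]
      _ ≤ dist (x (t (k + 1))) (x (t k)) := by
          rw [← Real.dist_eq]; exact dist_le_pi_dist _ _ 1
  have hsum : Summable fun k => r / (π * ((k + (N + 1) : ℕ) : ℝ)) :=
    (hbv.summable_dist ht_mono ht_mem).of_nonneg_of_le (fun k => by positivity) hdist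
  refine Real.not_summable_one_div_natCast ((summable_nat_add_iff (N + 1)).mp ?_)
  refine (hsum.mul_left (π / r)).congr fun k => ?_
  field_simp

theorem stmt_4 (T : ℝ) (hT : 0 < T)
    (x : ℝ → Fin 2 → ℝ)
    (hx : ∀ t, t < T → x t = (M (T - t) * (M T)⁻¹) *ᵥ ![1, 0])
    (hxT : ∀ t, T ≤ t → x t = 0) :
    ContinuousWithinAt x (Set.Icc 0 T) T ∧ ¬ BoundedVariationOn x (Set.Icc 0 T) := by
  set c := (M T)⁻¹ *ᵥ ![1, 0] with hc_def
  have hMc : M T *ᵥ c = ![1, 0] := by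
    rw [mulVec_mulVec, mul_nonsing_inv _ (by simp [M_det, hT.ne']), one_mulVec]
  have hc : c ≠ 0 := fun h => by simpa [h] using congrFun hMc 0
  obtain ⟨r, hr, φ, hφ, hcrφ⟩ := exists_pos_smul_cos_sin c hc
  have hx' : ∀ t < T, x t = r • (M (T - t) *ᵥ ![cos φ, sin φ]) := fun t ht => by
    rw [hx t ht, ← mulVec_mulVec, ← hc_def, hcrφ, mulVec_smul]
  exact ⟨(continuousWithinAt_of_eq_smul_M_mulVec hx' (hxT T le_rfl)).mono Icc_subset_Iic_self,
    not_boundedVariationOn_of_eq_smul_M_mulVec hT hr hφ hx'⟩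
end

section
/- A function that is continuous on [a,b], has bounded variation on [a,b], and maps null sets to null sets (Lusin's N-property) is absolutely continuous on [a,b]. -/
/-!
Since `g` has bounded variation it is differentiable off a null set `Z ⊆ [a, b]`, and `g'` is
integrable on `[a, b]`. For `[p, q] ⊆ [a, b]`, the intermediate value theorem and the area formula
on `[p, q] \ Z` give `|g q - g p| ≤ |g '' [p, q]| ≤ ∫_{[p, q]} |g'| + |g '' Z|`, and Lusin's
property kills the last term. Absolute continuity of the integral of `|g'|` then yields the `ε`–`δ`
condition for finite families of non-overlapping intervals.
-/

open Set MeasureTheory Filter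
open scoped ENNReal Function

def NonOverlapping {m : ℕ} (a b : Fin m → ℝ) : Prop :=
  ∀ i j, i ≠ j → b i ≤ a j ∨ b j ≤ a i

def ACOnReal (g : ℝ → ℝ) (I : Set ℝ) : Prop :=
  ∀ ε > (0:ℝ), ∃ δ > (0:ℝ), ∀ (m : ℕ) (a b : Fin m → ℝ),
    (∀ i, a i ≤ b i ∧ Set.Icc (a i) (b i) ⊆ I) → NonOverlapping a b →
    (∑ i, (b i - a i)) < δ → (∑ i, |g (b i) - g (a i)|) < ε

theorem NonOverlapping.pairwise_disjoint_Ioo {m : ℕ} {a b : Fin m → ℝ}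
    (h : NonOverlapping a b) : Pairwise (Disjoint on fun i => Ioo (a i) (b i)) := by
  intro i j hij
  rcases h i j hij with hij | hji
  · exact Ioo_disjoint_Ioo.2 ((min_le_left _ _).trans (hij.trans (le_max_right _ _)))
  · exact Ioo_disjoint_Ioo.2 ((min_le_right _ _).trans (hji.trans (le_max_left _ _)))

theorem ACOnReal.of_le_lintegral {g : ℝ → ℝ} {I : Set ℝ} {ρ : ℝ → ℝ≥0∞}
    (hρ : ∫⁻ x in I, ρ x ≠ ∞)
    (hg : ∀ p q, p ≤ q → Icc p q ⊆ I → ENNReal.ofReal |g q - g p| ≤ ∫⁻ x in Icc p q, ρ x) :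
    ACOnReal g I := by
  intro ε hε
  obtain ⟨δ, hδ, hρδ⟩ := exists_pos_setLIntegral_lt_of_measure_lt hρ (ENNReal.ofReal_pos.2 hε).ne'
  obtain ⟨η, -, hη, hηδ⟩ := ENNReal.lt_iff_exists_real_btwn.1 hδ
  refine ⟨η, ENNReal.ofReal_pos.1 hη, fun m p q hpq hno hsum => ?_⟩
  set U := ⋃ i, Ioo (p i) (q i)
  have hUI : U ⊆ I := iUnion_subset fun i => Ioo_subset_Icc_self.trans (hpq i).2
  have hU : volume.restrict I U < δ := calc
    volume.restrict I U ≤ volume U := Measure.restrict_apply_le _ _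
    _ ≤ ∑ i, volume (Ioo (p i) (q i)) := measure_iUnion_fintype_le _ _
    _ = ENNReal.ofReal (∑ i, (q i - p i)) := by
      rw [ENNReal.ofReal_sum_of_nonneg fun i _ => sub_nonneg.2 (hpq i).1]
      simp only [Real.volume_Ioo]
    _ ≤ ENNReal.ofReal η := ENNReal.ofReal_le_ofReal hsum.le
    _ < δ := hηδ
  have hUε := hρδ U hU
  rw [Measure.restrict_restrict_of_subset hUI] at hUε
  rw [← ENNReal.ofReal_lt_ofReal_iff_of_nonneg (Finset.sum_nonneg fun i _ => abs_nonneg _)]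
  calc ENNReal.ofReal (∑ i, |g (q i) - g (p i)|)
      = ∑ i, ENNReal.ofReal |g (q i) - g (p i)| :=
        ENNReal.ofReal_sum_of_nonneg fun i _ => abs_nonneg _
    _ ≤ ∑ i, ∫⁻ x in Ioo (p i) (q i), ρ x := Finset.sum_le_sum fun i _ =>
        (hg _ _ (hpq i).1 (hpq i).2).trans_eq (setLIntegral_congr Ioo_ae_eq_Icc).symm
    _ = ∫⁻ x in U, ρ x := by
        rw [lintegral_iUnion (fun _ => measurableSet_Ioo) hno.pairwise_disjoint_Ioo, tsum_fintype]
    _ < ENNReal.ofReal ε := hUε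

theorem ofReal_abs_sub_le_volume_image {g : ℝ → ℝ} {p q : ℝ} (hg : ContinuousOn g (uIcc p q)) :
    ENNReal.ofReal |g q - g p| ≤ volume (g '' uIcc p q) := by
  rw [← Real.volume_interval]
  exact measure_mono (intermediate_value_uIcc hg)

theorem volume_image_le_lintegral_enorm_deriv {g : ℝ → ℝ} {s : Set ℝ} (hs : MeasurableSet s)
    (hN : ∀ t ⊆ s, volume t = 0 → volume (g '' t) = 0)
    (hdiff : ∀ᵐ x, x ∈ s → DifferentiableAt ℝ g x) :
    volume (g '' s) ≤ ∫⁻ x in s, ‖deriv g x‖ₑ := by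
  set D := s ∩ {x | DifferentiableAt ℝ g x}
  have hD : MeasurableSet D := hs.inter (measurableSet_of_differentiableAt ℝ g)
  have hsD : volume (g '' (s \ D)) = 0 := by
    refine hN _ sdiff_subset (measure_eq_zero_iff_ae_notMem.2 ?_)
    filter_upwards [hdiff] with x hx hxsD
    exact hxsD.2 ⟨hxsD.1, hx hxsD.1⟩
  have hgD : volume (g '' D) ≤ ∫⁻ x in D, ‖deriv g x‖ₑ := by
    simpa only [ContinuousLinearMap.smulRight_one_eq_toSpanSingleton,
      ContinuousLinearMap.det_toSpanSingleton, Real.enorm_eq_ofReal_abs] using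
      addHaar_image_le_lintegral_abs_det_fderiv volume hD
        fun x hx => hx.2.hasDerivAt.hasFDerivAt.hasFDerivWithinAt
  calc volume (g '' s) = volume (g '' D ∪ g '' (s \ D)) := by
        rw [← image_union, union_sdiff_cancel inter_subset_left]
    _ ≤ volume (g '' D) + volume (g '' (s \ D)) := measure_union_le _ _
    _ ≤ ∫⁻ x in s, ‖deriv g x‖ₑ := by
        rw [hsD, add_zero]
        exact hgD.trans (lintegral_mono_set inter_subset_left)

theorem stmt_9 (a b : ℝ) (hab : a ≤ b) (g : ℝ → ℝ)
    (hcont : ContinuousOn g (Set.Icc a b))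
    (hbv : BoundedVariationOn g (Set.Icc a b))
    (hN : ∀ S ⊆ Set.Icc a b, MeasureTheory.volume S = 0 →
      MeasureTheory.volume (g '' S) = 0) :
    ACOnReal g (Set.Icc a b) := by
  rw [← uIcc_of_le hab] at hbv
  have hdiff := hbv.ae_differentiableAt_of_mem_uIcc
  rw [uIcc_of_le hab] at hdiff
  have hint : IntegrableOn (deriv g) (Icc a b) :=
    (intervalIntegrable_iff_integrableOn_Icc_of_le hab).1 hbv.intervalIntegrable_deriv
  refine ACOnReal.of_le_lintegral hint.2.ne fun p q hpq hsub => ?_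
  calc ENNReal.ofReal |g q - g p| ≤ volume (g '' uIcc p q) :=
        ofReal_abs_sub_le_volume_image (hcont.mono (uIcc_of_le hpq ▸ hsub))
    _ ≤ ∫⁻ x in Icc p q, ‖deriv g x‖ₑ := by
        rw [uIcc_of_le hpq]
        refine volume_image_le_lintegral_enorm_deriv measurableSet_Icc
          (fun t ht => hN t (ht.trans hsub)) ?_
        filter_upwards [hdiff] with x hx hxpq using hx (hsub hxpq)
end

section
/- If g : ℝ → ℝⁿ is ACG* on an interval I, then g is differentiable at almost every point of I. -/
open Set MeasureTheory Filter Matrix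

noncomputable def osc {n : ℕ} (g : ℝ → (Fin n → ℝ)) (s : Set ℝ) : ℝ :=
  sSup ((fun p : ℝ × ℝ => ‖g p.1 - g p.2‖) '' (s ×ˢ s))

def ACOn {n : ℕ} (g : ℝ → (Fin n → ℝ)) (I : Set ℝ) : Prop :=
  ∀ ε > (0:ℝ), ∃ δ > (0:ℝ), ∀ (m : ℕ) (a b : Fin m → ℝ),
    (∀ i, a i ≤ b i ∧ Set.Icc (a i) (b i) ⊆ I) → NonOverlapping a b →
    (∑ i, (b i - a i)) < δ → (∑ i, ‖g (b i) - g (a i)‖) < ε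

def ACStarOn {n : ℕ} (g : ℝ → (Fin n → ℝ)) (S : Set ℝ) : Prop :=
  ∀ ε > (0:ℝ), ∃ δ > (0:ℝ), ∀ (m : ℕ) (a b : Fin m → ℝ),
    (∀ i, a i ≤ b i ∧ a i ∈ S ∧ b i ∈ S) → NonOverlapping a b →
    (∑ i, (b i - a i)) < δ → (∑ i, osc g (Set.Icc (a i) (b i))) < ε

def ACGStarOn {n : ℕ} (g : ℝ → (Fin n → ℝ)) (S : Set ℝ) : Prop :=
  ContinuousOn g S ∧ ∃ f : ℕ → Set ℝ, S = ⋃ j, f j ∧ ∀ j, ACStarOn g (f j)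

def LACOn {n : ℕ} (g : ℝ → (Fin n → ℝ)) (I : Set ℝ) : Prop :=
  ∀ a b : ℝ, a ≤ b → Set.Icc a b ⊆ I → ACOn g (Set.Icc a b)

/-! Split `I` into countably many pieces `F`, each so short that the AC* condition bounds the sum
of the oscillations of `g` over every non-overlapping family of intervals with endpoints in `F`.
On such a piece the oscillation variation `φ t`, the supremum of these sums over families in
`F ∩ (-∞, t]`, is monotone and satisfies `‖g y - g p‖ ≤ φ q - φ p` for `p ≤ y ≤ q`, `p, q ∈ F`.
So `g` has locally bounded variation on `F`, hence is differentiable relative to `F` at almost every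
point of `F`, and `φ` is differentiable almost everywhere. At a Lebesgue density point `x` of `F`
every `y` near `x` lies between points `u ≤ y ≤ v` of `F` with `v - u = o(|y - x|)`; then
`‖g y - g u‖ ≤ φ v - φ u = o(|y - x|)` because `φ` is differentiable at `x`, and the relative
derivative of `g` at `x` is a genuine one. -/

open Topology

lemma NonOverlapping.sum_sub_le {m : ℕ} {a b : Fin m → ℝ} (hno : NonOverlapping a b)
    (hab : ∀ i, a i ≤ b i) {A B : ℝ} (hAB : A ≤ B) (hsub : ∀ i, A ≤ a i ∧ b i ≤ B) :
    ∑ i, (b i - a i) ≤ B - A := by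
  have hdisj : Pairwise (Function.onFun Disjoint fun i => Ioc (a i) (b i)) := fun i j hij => by
    rw [Function.onFun, Ioc_disjoint_Ioc]
    rcases hno i j hij with h | h
    · exact (min_le_left _ _).trans (h.trans (le_max_right _ _))
    · exact (min_le_right _ _).trans (h.trans (le_max_left _ _))
  have hvol : volume (⋃ i, Ioc (a i) (b i)) ≤ volume (Ioc A B) :=
    measure_mono (iUnion_subset fun i => Ioc_subset_Ioc (hsub i).1 (hsub i).2)
  rw [measure_iUnion hdisj fun _ => measurableSet_Ioc, tsum_fintype] at hvol
  simp only [Real.volume_Ioc] at hvol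
  rw [← ENNReal.ofReal_sum_of_nonneg fun i _ => sub_nonneg.2 (hab i)] at hvol
  exact (ENNReal.ofReal_le_ofReal_iff (sub_nonneg.2 hAB)).1 hvol

lemma Filter.Eventually.forall_of_dist_le_mul {α : Type*} [PseudoMetricSpace α] {x : α}
    {p : α → Prop} (h : ∀ᶠ u in 𝓝 x, p u) {C : ℝ} (hC : 0 < C) :
    ∀ᶠ y in 𝓝 x, ∀ u, dist u x ≤ C * dist y x → p u := by
  obtain ⟨r, hr, H⟩ := Metric.eventually_nhds_iff.1 h
  refine Metric.eventually_nhds_iff.2 ⟨r / C, div_pos hr hC, fun y hy u hu => H ?_⟩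
  calc dist u x ≤ C * dist y x := hu
    _ < C * (r / C) := by gcongr
    _ = r := mul_div_cancel₀ r hC.ne'

lemma eVariationOn_le_of_edist_le {α E E' : Type*} [LinearOrder α] [PseudoEMetricSpace E]
    [PseudoEMetricSpace E'] {f : α → E} {φ : α → E'} {s : Set α}
    (h : ∀ p ∈ s, ∀ q ∈ s, p ≤ q → edist (f q) (f p) ≤ edist (φ q) (φ p)) :
    eVariationOn f s ≤ eVariationOn φ s :=
  iSup_le fun ⟨_, _, hu, us⟩ =>
    (Finset.sum_le_sum fun i _ => h _ (us i) _ (us (i + 1)) (hu (Nat.le_succ i))).trans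
      (eVariationOn.sum_le hu us)

lemma locallyBoundedVariationOn_of_norm_sub_le {E : Type*} [NormedAddCommGroup E] {g : ℝ → E}
    {φ : ℝ → ℝ} {s : Set ℝ}
    (h : ∀ p ∈ s, ∀ q ∈ s, p ≤ q → ‖g q - g p‖ ≤ φ q - φ p) :
    LocallyBoundedVariationOn g s := by
  have hmono : MonotoneOn φ s := fun p hp q hq hpq =>
    sub_nonneg.1 ((norm_nonneg _).trans (h p hp q hq hpq))
  intro a b ha hb
  refine ne_top_of_le_ne_top (hmono.locallyBoundedVariationOn a b ha hb)
    (eVariationOn_le_of_edist_le fun p hp q hq hpq => ?_)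
  rw [edist_dist, edist_dist, dist_eq_norm, Real.dist_eq,
    abs_of_nonneg (sub_nonneg.2 (hmono hp.1 hq.1 hpq))]
  exact ENNReal.ofReal_le_ofReal (h p hp.1 q hq.1 hpq)

section Density

variable {F : Set ℝ} {x : ℝ}
  (hden : Tendsto (fun r => volume (F ∩ Metric.closedBall x r) / volume (Metric.closedBall x r))
    (𝓝[>] 0) (𝓝 1))
include hden

lemma eventually_gap_lt_of_tendsto_density {η : ℝ} (hη : 0 < η) :
    ∀ᶠ r in 𝓝[>] 0, ∀ s t, x - r ≤ s → t ≤ x + r → F ∩ Ioo s t = ∅ → t - s < η * r := by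
  have hratio := ((ENNReal.tendsto_toReal ENNReal.one_ne_top).comp hden).eventually
    (lt_mem_nhds (show 1 - η / 2 < (1 : ENNReal).toReal by simp; linarith))
  filter_upwards [hratio, self_mem_nhdsWithin] with r hr (hr0 : 0 < r) s t hs ht hgap
  have hB : volume (Metric.closedBall x r) = ENNReal.ofReal (2 * r) := Real.volume_closedBall x r
  have hunion : volume (F ∩ Metric.closedBall x r) + volume (Ioo s t)
      ≤ volume (Metric.closedBall x r) := by
    rw [← measure_union _ measurableSet_Ioo]
    · refine measure_mono (union_subset inter_subset_right ?_)
      rw [Real.closedBall_eq_Icc]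
      exact Ioo_subset_Icc_self.trans (Icc_subset_Icc hs ht)
    · rw [disjoint_iff_inter_eq_empty, ← subset_empty_iff, ← hgap]
      exact inter_subset_inter_left _ inter_subset_left
  have hfin : volume (F ∩ Metric.closedBall x r) ≠ ⊤ :=
    ne_top_of_le_ne_top (hB ▸ ENNReal.ofReal_ne_top) (measure_mono inter_subset_right)
  rw [Real.volume_Ioo, hB] at hunion
  have hreal := ENNReal.toReal_mono ENNReal.ofReal_ne_top hunion
  rw [ENNReal.toReal_add hfin ENNReal.ofReal_ne_top,
    ENNReal.toReal_ofReal (by linarith : (0 : ℝ) ≤ 2 * r), ENNReal.toReal_ofReal'] at hreal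
  simp only [Function.comp_apply, ENNReal.toReal_div, hB,
    ENNReal.toReal_ofReal (by linarith : (0 : ℝ) ≤ 2 * r)] at hr
  rw [lt_div_iff₀ (by linarith)] at hr
  linarith [le_max_left (t - s) 0]

lemma eventually_exists_mem_between_of_tendsto_density {ε : ℝ} (hε : 0 < ε) :
    ∀ᶠ y in 𝓝[≠] x, ∃ u ∈ F, ∃ v ∈ F, u ≤ y ∧ y ≤ v ∧ v - u ≤ ε * |y - x| := by
  obtain ⟨κ, hκ, hκ1, hκε⟩ : ∃ κ : ℝ, 0 < κ ∧ κ ≤ 1 ∧ 2 * κ ≤ ε :=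
    ⟨min ε 1 / 2, by positivity, by linarith [min_le_right ε 1], by linarith [min_le_left ε 1]⟩
  have htend : Tendsto (fun y => 2 * |y - x|) (𝓝[≠] x) (𝓝[>] 0) := by
    refine tendsto_nhdsWithin_iff.2 ⟨?_, eventually_nhdsWithin_of_forall fun y hy => ?_⟩
    · exact ((by fun_prop : Continuous fun y => 2 * |y - x|).tendsto' x 0 (by simp)).mono_left
        nhdsWithin_le_nhds
    · exact mul_pos two_pos (abs_pos.2 (sub_ne_zero.2 hy))
  filter_upwards [htend.eventually (eventually_gap_lt_of_tendsto_density hden (half_pos hκ))]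
    with y hy
  set h := |y - x|
  have hκh : κ * h ≤ h := mul_le_of_le_one_left (abs_nonneg _) hκ1
  have hyx := abs_le.1 (le_refl h)
  have hmeets : ∀ s, x - 2 * h ≤ s → s + κ * h ≤ x + 2 * h → (F ∩ Ioo s (s + κ * h)).Nonempty :=
    fun s hs hs' => nonempty_iff_ne_empty.2 fun hgap =>
      (hy s _ hs hs' hgap).ne (by ring)
  obtain ⟨u, hu, hu'⟩ := hmeets (y - κ * h) (by linarith) (by linarith)
  obtain ⟨v, hv, hv'⟩ := hmeets y (by linarith) (by linarith)
  refine ⟨u, hu, v, hv, by linarith [hu'.2], hv'.1.le, ?_⟩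
  nlinarith [hu'.1, hv'.2, abs_nonneg (y - x)]

variable {E : Type*} [NormedAddCommGroup E] [NormedSpace ℝ E] {g : ℝ → E} {φ : ℝ → ℝ}
  {L : ℝ →L[ℝ] E} (hdom : ∀ p ∈ F, ∀ q ∈ F, ∀ y ∈ Icc p q, ‖g y - g p‖ ≤ φ q - φ p)
  (hL : HasFDerivWithinAt g L F x) (hφ : DifferentiableAt ℝ φ x)
include hdom hL hφ

lemma eventually_norm_sub_sub_le_of_norm_sub_le_sub {ε : ℝ} (hε : 0 < ε) (hε1 : ε ≤ 1) :
    ∀ᶠ y in 𝓝[≠] x,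
      ‖g y - g x - L (y - x)‖ ≤ (6 + |deriv φ x| + ‖L‖) * ε * |y - x| := by
  have hgF : ∀ᶠ y in 𝓝 x, ∀ u, dist u x ≤ 2 * dist y x →
      u ∈ F → ‖g u - g x - L (u - x)‖ ≤ ε * ‖u - x‖ :=
    (eventually_nhdsWithin_iff.1 (hL.isLittleO.def hε)).forall_of_dist_le_mul two_pos
  have hφx : ∀ᶠ y in 𝓝 x, ∀ w, dist w x ≤ 2 * dist y x →
      ‖φ w - φ x - (w - x) • deriv φ x‖ ≤ ε * ‖w - x‖ :=
    ((hasDerivAt_iff_isLittleO.1 hφ.hasDerivAt).def hε).forall_of_dist_le_mul two_pos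
  filter_upwards [nhdsWithin_le_nhds hgF, nhdsWithin_le_nhds hφx,
    eventually_exists_mem_between_of_tendsto_density hden hε]
    with y hgy hφy ⟨u, hu, v, hv, huy, hyv, huv⟩
  simp only [Real.dist_eq, Real.norm_eq_abs, smul_eq_mul] at hgy hφy
  set D := deriv φ x
  set h := |y - x|
  have hyx := abs_le.1 (le_refl h)
  have hεh : ε * h ≤ h := mul_le_of_le_one_left (abs_nonneg _) hε1
  have hux : |u - x| ≤ 2 * h := abs_le.2 ⟨by linarith, by linarith⟩
  have hvx : |v - x| ≤ 2 * h := abs_le.2 ⟨by linarith, by linarith⟩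
  have hφuv : φ v - φ u ≤ |D| * (ε * h) + 4 * ε * h := by
    have hu' := abs_le.1 (hφy u hux)
    have hv' := abs_le.1 (hφy v hvx)
    have hDuv : (v - u) * D ≤ |D| * (ε * h) := by
      nlinarith [le_abs_self D, neg_abs_le D, abs_nonneg D]
    nlinarith [abs_nonneg (u - x), abs_nonneg (v - x)]
  have hLyu : ‖L (y - u)‖ ≤ ‖L‖ * (ε * h) := by
    refine (L.le_opNorm _).trans (mul_le_mul_of_nonneg_left ?_ (norm_nonneg L))
    rw [Real.norm_eq_abs, abs_of_nonneg (sub_nonneg.2 huy)]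
    linarith
  calc ‖g y - g x - L (y - x)‖ = ‖(g y - g u) + (g u - g x - L (u - x)) - L (y - u)‖ := by
        rw [show y - x = (u - x) + (y - u) by ring, map_add]
        congr 1
        abel
    _ ≤ ‖g y - g u‖ + ‖g u - g x - L (u - x)‖ + ‖L (y - u)‖ :=
        norm_sub_le_of_le (norm_add_le _ _) le_rfl
    _ ≤ (|D| * (ε * h) + 4 * ε * h) + ε * (2 * h) + ‖L‖ * (ε * h) := by
        gcongr
        · exact (hdom u hu v hv y ⟨huy, hyv⟩).trans hφuv
        · exact (hgy u hux hu).trans (mul_le_mul_of_nonneg_left hux hε.le)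
    _ = (6 + |D| + ‖L‖) * ε * h := by ring

theorem hasFDerivAt_of_norm_sub_le_sub : HasFDerivAt g L x := by
  rw [← hasFDerivWithinAt_univ, ← hasFDerivWithinAt_sdiff_singleton x, ← compl_eq_univ_sdiff]
  refine HasFDerivWithinAt.of_isLittleO (Asymptotics.isLittleO_iff.2 fun c hc => ?_)
  set K := 6 + |deriv φ x| + ‖L‖
  have hK : 0 < K := by positivity
  obtain ⟨ε, hε, hε1, hεc⟩ : ∃ ε, 0 < ε ∧ ε ≤ 1 ∧ K * ε ≤ c :=
    ⟨min 1 (c / K), by positivity, min_le_left _ _,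
      (mul_le_mul_of_nonneg_left (min_le_right _ _) hK.le).trans (mul_div_cancel₀ c hK.ne').le⟩
  filter_upwards [eventually_norm_sub_sub_le_of_norm_sub_le_sub hden hdom hL hφ hε hε1]
    with y hy
  exact hy.trans (mul_le_mul_of_nonneg_right hεc (abs_nonneg _))

end Density

section Oscillation

variable {n : ℕ} {g : ℝ → (Fin n → ℝ)}

lemma norm_sub_le_osc {a b p q : ℝ} (hg : ContinuousOn g (Icc a b)) (hp : p ∈ Icc a b)
    (hq : q ∈ Icc a b) : ‖g p - g q‖ ≤ osc g (Icc a b) := by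
  refine le_csSup ((isCompact_Icc.prod isCompact_Icc).image_of_continuousOn ?_).bddAbove
    ⟨(p, q), ⟨hp, hq⟩, rfl⟩
  exact ((hg.comp continuousOn_fst fun _ h => h.1).sub
    (hg.comp continuousOn_snd fun _ h => h.2)).norm

def oscSums (g : ℝ → (Fin n → ℝ)) (F : Set ℝ) : Set ℝ :=
  {s | ∃ (m : ℕ) (a b : Fin m → ℝ), (∀ i, a i ≤ b i ∧ a i ∈ F ∧ b i ∈ F) ∧
    NonOverlapping a b ∧ s = ∑ i, osc g (Icc (a i) (b i))}

noncomputable def oscVariation (g : ℝ → (Fin n → ℝ)) (F : Set ℝ) (t : ℝ) : ℝ :=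
  sSup (oscSums g (F ∩ Iic t))

variable {F : Set ℝ}

lemma zero_mem_oscSums (F : Set ℝ) : (0 : ℝ) ∈ oscSums g F :=
  ⟨0, Fin.elim0, Fin.elim0, fun i => i.elim0, fun i => i.elim0, by simp⟩

lemma oscSums_mono {F' : Set ℝ} (h : F ⊆ F') : oscSums g F ⊆ oscSums g F' := by
  rintro _ ⟨m, a, b, hab, hno, rfl⟩
  exact ⟨m, a, b, fun i => ⟨(hab i).1, h (hab i).2.1, h (hab i).2.2⟩, hno, rfl⟩

lemma add_osc_mem_oscSums {s p q : ℝ} (hs : s ∈ oscSums g (F ∩ Iic p)) (hp : p ∈ F)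
    (hq : q ∈ F) (hpq : p ≤ q) : s + osc g (Icc p q) ∈ oscSums g (F ∩ Iic q) := by
  obtain ⟨m, a, b, hab, hno, rfl⟩ := hs
  refine ⟨m + 1, Fin.snoc a p, Fin.snoc b q, fun i => ?_, fun i j hij => ?_, ?_⟩
  · refine Fin.lastCases ?_ (fun i => ?_) i
    · simpa only [Fin.snoc_last] using ⟨hpq, ⟨hp, hpq⟩, hq, mem_Iic.2 le_rfl⟩
    · obtain ⟨hi, ⟨ha, -⟩, hb, hbp⟩ := hab i
      simpa only [Fin.snoc_castSucc] using ⟨hi, ⟨ha, hi.trans (hbp.trans hpq)⟩, hb, hbp.trans hpq⟩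
  · rcases Fin.eq_castSucc_or_eq_last i with ⟨i, rfl⟩ | rfl <;>
      rcases Fin.eq_castSucc_or_eq_last j with ⟨j, rfl⟩ | rfl
    · simpa only [Fin.snoc_castSucc] using hno i j (ne_of_apply_ne _ hij)
    · simpa only [Fin.snoc_castSucc, Fin.snoc_last] using Or.inl (mem_Iic.1 (hab i).2.2.2)
    · simpa only [Fin.snoc_castSucc, Fin.snoc_last] using Or.inr (mem_Iic.1 (hab j).2.2.2)
    · exact absurd rfl hij
  · simp only [Fin.sum_univ_castSucc, Fin.snoc_castSucc, Fin.snoc_last]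

variable (hF : BddAbove (oscSums g F))
include hF

lemma oscVariation_mono : Monotone (oscVariation g F) := fun _ _ hst =>
  csSup_le_csSup (hF.mono (oscSums_mono inter_subset_left)) ⟨0, zero_mem_oscSums _⟩
    (oscSums_mono (inter_subset_inter_right _ (Iic_subset_Iic.2 hst)))

lemma osc_le_oscVariation_sub {p q : ℝ} (hp : p ∈ F) (hq : q ∈ F) (hpq : p ≤ q) :
    osc g (Icc p q) ≤ oscVariation g F q - oscVariation g F p := by
  rw [le_sub_comm]
  refine csSup_le ⟨0, zero_mem_oscSums _⟩ fun s hs => le_sub_iff_add_le.2 ?_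
  exact le_csSup (hF.mono (oscSums_mono inter_subset_left)) (add_osc_mem_oscSums hs hp hq hpq)

lemma norm_sub_le_oscVariation_sub {I : Set ℝ} (hI : I.OrdConnected) (hcont : ContinuousOn g I)
    (hFI : F ⊆ I) :
    ∀ p ∈ F, ∀ q ∈ F, ∀ y ∈ Icc p q, ‖g y - g p‖ ≤ oscVariation g F q - oscVariation g F p :=
  fun _ hp _ hq _ hy =>
    (norm_sub_le_osc (hcont.mono (hI.out (hFI hp) (hFI hq))) hy ⟨le_rfl, hy.1.trans hy.2⟩).trans
      (osc_le_oscVariation_sub hF hp hq (hy.1.trans hy.2))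

theorem ae_differentiableAt_of_bddAbove_oscSums {I : Set ℝ} (hI : I.OrdConnected)
    (hcont : ContinuousOn g I) (hFI : F ⊆ I) : ∀ᵐ x, x ∈ F → DifferentiableAt ℝ g x := by
  have hdom := norm_sub_le_oscVariation_sub hF hI hcont hFI
  have hBV : LocallyBoundedVariationOn g F := locallyBoundedVariationOn_of_norm_sub_le
    fun p hp q hq hpq => hdom p hp q hq q ⟨hpq, le_rfl⟩
  filter_upwards [hBV.ae_differentiableWithinAt_of_mem, (oscVariation_mono hF).ae_differentiableAt,
    ae_imp_of_ae_restrict (Besicovitch.ae_tendsto_measure_inter_div volume F)]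
    with x hgx hφx hden hx
  exact (hasFDerivAt_of_norm_sub_le_sub (hden hx) hdom (hgx hx).hasFDerivWithinAt
    hφx).differentiableAt

end Oscillation

section ACStar

variable {n : ℕ} {g : ℝ → (Fin n → ℝ)} {S : Set ℝ}

theorem ACStarOn.exists_bddAbove_oscSums (h : ACStarOn g S) :
    ∃ δ > 0, ∀ F ⊆ S, ∀ A B, A ≤ B → B - A < δ → F ⊆ Icc A B → BddAbove (oscSums g F) := by
  obtain ⟨δ, hδ, hAC⟩ := h 1 one_pos
  refine ⟨δ, hδ, fun F hFS A B hAB hBA hFAB => ⟨1, ?_⟩⟩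
  rintro _ ⟨m, a, b, hab, hno, rfl⟩
  refine (hAC m a b (fun i => ⟨(hab i).1, hFS (hab i).2.1, hFS (hab i).2.2⟩) hno ?_).le
  exact (hno.sum_sub_le (fun i => (hab i).1) hAB
    fun i => ⟨(hFAB (hab i).2.1).1, (hFAB (hab i).2.2).2⟩).trans_lt hBA

theorem ACStarOn.ae_differentiableAt {I : Set ℝ} (h : ACStarOn g S) (hI : I.OrdConnected)
    (hcont : ContinuousOn g I) (hSI : S ⊆ I) : ∀ᵐ x, x ∈ S → DifferentiableAt ℝ g x := by
  obtain ⟨δ, hδ, hbdd⟩ := h.exists_bddAbove_oscSums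
  have hpiece (k : ℤ) :
      ∀ᵐ x, x ∈ S ∩ Ioc (k • (δ / 2)) ((k + 1) • (δ / 2)) → DifferentiableAt ℝ g x := by
    refine ae_differentiableAt_of_bddAbove_oscSums (hbdd _ inter_subset_left _ _ ?_ ?_
      (inter_subset_right.trans Ioc_subset_Icc_self)) hI hcont (inter_subset_left.trans hSI) <;>
    simp only [add_zsmul, one_zsmul] <;> linarith
  filter_upwards [ae_all_iff.2 hpiece] with x hx hxS
  have hcover : ⋃ k : ℤ, Ioc (k • (δ / 2)) ((k + 1) • (δ / 2)) = univ := by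
    simpa only [zero_add] using iUnion_Ioc_add_zsmul (half_pos hδ) 0
  obtain ⟨k, hk⟩ := mem_iUnion.1 (hcover.symm ▸ mem_univ x)
  exact hx k ⟨hxS, hk⟩

end ACStar

theorem stmt_11_general {n : ℕ} (g : ℝ → (Fin n → ℝ)) (I : Set ℝ)
    (hI : I.OrdConnected)
    (hacg : ACGStarOn g I) :
    ∀ᵐ t ∂(MeasureTheory.volume.restrict I), DifferentiableAt ℝ g t := by
  obtain ⟨hcont, f, hIf, hf⟩ := hacg
  rw [ae_restrict_iff' hI.measurableSet]
  filter_upwards [ae_all_iff.2 fun j =>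
    (hf j).ae_differentiableAt hI hcont (hIf ▸ subset_iUnion f j)] with t ht htI
  obtain ⟨j, hj⟩ := mem_iUnion.1 (hIf ▸ htI)
  exact ht j hj

theorem stmt_11 {n : ℕ} (g : ℝ → (Fin n → ℝ)) (I : Set ℝ)
    (hI : I.OrdConnected) (hIne : MeasureTheory.volume I ≠ 0)
    (hacg : ACGStarOn g I) :
    ∀ᵐ t ∂(MeasureTheory.volume.restrict I), DifferentiableAt ℝ g t :=
  stmt_11_general g I hI hacg
end

section
/- If a continuous function g : ℝ → ℝⁿ is ACG* on a compact interval J, then J contains an open subinterval H on which g is AC* (and hence locally absolutely continuous on H). -/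
open Set MeasureTheory Filter Matrix

open Topology

/-! ### Auxiliary lemmas about `osc` -/

lemma osc_bdd {n : ℕ} {g : ℝ → (Fin n → ℝ)} (hg : Continuous g) {s : Set ℝ}
    (hs : IsCompact s) :
    BddAbove ((fun p : ℝ × ℝ => ‖g p.1 - g p.2‖) '' (s ×ˢ s)) :=
  ((hs.prod hs).image (by fun_prop)).bddAbove

lemma norm_le_osc {n : ℕ} {g : ℝ → (Fin n → ℝ)} (hg : Continuous g) {s : Set ℝ}
    (hs : IsCompact s) {x y : ℝ} (hx : x ∈ s) (hy : y ∈ s) :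
    ‖g x - g y‖ ≤ osc g s :=
  le_csSup (osc_bdd hg hs) ⟨(x, y), ⟨hx, hy⟩, rfl⟩

lemma osc_singleton {n : ℕ} (g : ℝ → (Fin n → ℝ)) (x : ℝ) : osc g {x} = 0 := by
  have h : ({x} : Set ℝ) ×ˢ {x} = {(x, x)} := by ext p; simp [Prod.ext_iff]
  simp [osc, h]

theorem stmt_12 {n : ℕ} (g : ℝ → (Fin n → ℝ)) (a b : ℝ) (hab : a < b)
    (hg : Continuous g) (hacg : ACGStarOn g (Set.Icc a b)) :
    ∃ c d : ℝ, c < d ∧ Set.Ioo c d ⊆ Set.Icc a b ∧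
      ACStarOn g (Set.Ioo c d) ∧ LACOn g (Set.Ioo c d) := by
  obtain ⟨hgc, f, hcover, hAC⟩ := hacg
  have hfsub : ∀ j, f j ⊆ Icc a b := fun j => by
    rw [hcover]; exact subset_iUnion f j
  -- Baire category on the compact interval
  haveI : CompleteSpace ↥(Icc a b) := isClosed_Icc.completeSpace_coe
  haveI : Nonempty ↥(Icc a b) := ⟨⟨a, le_refl a, hab.le⟩⟩
  have hclosed : ∀ j : ℕ,
      IsClosed ((fun x : ↥(Icc a b) => (x : ℝ)) ⁻¹' closure (f j)) :=
    fun j => isClosed_closure.preimage continuous_subtype_val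
  have hunion : ⋃ j, ((fun x : ↥(Icc a b) => (x : ℝ)) ⁻¹' closure (f j)) = univ := by
    ext x
    simp only [mem_iUnion, mem_univ, iff_true, mem_preimage]
    have hx : (x : ℝ) ∈ ⋃ j, f j := by rw [← hcover]; exact x.2
    obtain ⟨j, hj⟩ := mem_iUnion.1 hx
    exact ⟨j, subset_closure hj⟩
  obtain ⟨j, x, hx⟩ := nonempty_interior_of_iUnion_of_closed hclosed hunion
  have hmem : interior ((fun x : ↥(Icc a b) => (x : ℝ)) ⁻¹' closure (f j)) ∈ 𝓝 x :=
    isOpen_interior.mem_nhds hx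
  rw [mem_nhds_subtype] at hmem
  obtain ⟨u, hu, husub⟩ := hmem
  obtain ⟨η, hη, hball⟩ := Metric.mem_nhds_iff.1 hu
  set c : ℝ := max a ((x : ℝ) - η) with hc
  set d : ℝ := min b ((x : ℝ) + η) with hd
  have hxab : (x : ℝ) ∈ Icc a b := x.2
  have hcd : c < d := by
    apply max_lt <;> apply lt_min
    · exact hab
    · linarith [hxab.1]
    · linarith [hxab.2]
    · linarith
  have hIoo_sub : Ioo c d ⊆ Icc a b := fun t ht =>
    ⟨le_of_lt (lt_of_le_of_lt (le_max_left _ _) ht.1),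
     le_of_lt (lt_of_lt_of_le ht.2 (min_le_left _ _))⟩
  have hIoo_cl : Ioo c d ⊆ closure (f j) := by
    intro t ht
    have htI : t ∈ Icc a b := hIoo_sub ht
    have htu : t ∈ u := by
      apply hball
      rw [Metric.mem_ball, Real.dist_eq, abs_sub_lt_iff]
      have h1 : (x : ℝ) - η ≤ c := le_max_right _ _
      have h2 : d ≤ (x : ℝ) + η := min_le_right _ _
      constructor <;> [linarith [ht.2]; linarith [ht.1]]
    have h2 : (⟨t, htI⟩ : ↥(Icc a b)) ∈
        (fun x : ↥(Icc a b) => (x : ℝ)) ⁻¹' closure (f j) :=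
      interior_subset (husub htu)
    exact h2
  -- uniform continuity on [a,b]
  have hUC : ∀ η > (0:ℝ), ∃ ρ > (0:ℝ), ∀ p ∈ Icc a b, ∀ q ∈ Icc a b,
      |p - q| < ρ → ‖g p - g q‖ < η := by
    have huc := isCompact_Icc.uniformContinuousOn_of_continuous
      (hg.continuousOn : ContinuousOn g (Icc a b))
    rw [Metric.uniformContinuousOn_iff] at huc
    intro η' hη'
    obtain ⟨ρ, hρ, h⟩ := huc η' hη'
    refine ⟨ρ, hρ, fun p hp q hq hpq => ?_⟩
    have := h p hp q hq (by rwa [Real.dist_eq])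
    rwa [dist_eq_norm] at this
  -- the main AC* property on (c,d)
  have hACstar : ACStarOn g (Ioo c d) := by
    intro ε hε
    obtain ⟨δ, hδ, H⟩ := hAC j (ε / 2) (by linarith)
    refine ⟨δ, hδ, ?_⟩
    intro m A B hAB hNO hsum
    set κ : ℝ := ε / (8 * (m + 1)) with hκdef
    have hκ : 0 < κ := by positivity
    obtain ⟨ρ, hρ, hρUC⟩ := hUC κ hκ
    set T : Finset (Fin m) :=
      Finset.univ.filter (fun i => 2 * κ < osc g (Icc (A i) (B i))) with hT
    have hIooAB : ∀ i : Fin m, Ioo (A i) (B i) ⊆ Ioo c d := fun i t ht =>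
      ⟨lt_trans (hAB i).2.1.1 ht.1, lt_trans ht.2 (hAB i).2.2.2⟩
    -- approximate points of Ioo (A i) (B i) by points of f j inside the interval
    have approx : ∀ i : Fin m, ∀ z ∈ Ioo (A i) (B i),
        ∃ w ∈ f j, |z - w| < ρ ∧ w ∈ Ioo (A i) (B i) := by
      intro i z hz
      have hzcl : z ∈ closure (f j) := hIoo_cl (hIooAB i hz)
      set r : ℝ := min ρ (min (z - A i) (B i - z)) with hr
      have hrpos : 0 < r :=
        lt_min hρ (lt_min (by linarith [hz.1]) (by linarith [hz.2]))
      obtain ⟨w, hw, hdw⟩ := Metric.mem_closure_iff.1 hzcl r hrpos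
      rw [Real.dist_eq] at hdw
      have h1 : |z - w| < ρ := lt_of_lt_of_le hdw (min_le_left _ _)
      have h2 : |z - w| < z - A i :=
        lt_of_lt_of_le hdw (le_trans (min_le_right _ _) (min_le_left _ _))
      have h3 : |z - w| < B i - z :=
        lt_of_lt_of_le hdw (le_trans (min_le_right _ _) (min_le_right _ _))
      have h4 : z - w ≤ |z - w| := le_abs_self _
      have h5 : -(|z - w|) ≤ z - w := neg_abs_le _
      exact ⟨w, hw, h1, by constructor <;> linarith⟩
    -- key construction for "big" indices
    have key : ∀ i : Fin m, ∃ p : ℝ × ℝ, i ∈ T →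
        p.1 ∈ f j ∧ p.2 ∈ f j ∧ p.1 ≤ p.2 ∧ Icc p.1 p.2 ⊆ Ioo (A i) (B i) ∧
        osc g (Icc (A i) (B i)) ≤ osc g (Icc p.1 p.2) + 3 * κ := by
      intro i
      by_cases hi : i ∈ T
      swap
      · exact ⟨(0, 0), fun h => absurd h hi⟩
      rw [hT, Finset.mem_filter] at hi
      have hosc_pos : 2 * κ < osc g (Icc (A i) (B i)) := hi.2
      have hABi : A i ≤ B i := (hAB i).1
      have hABlt : A i < B i := by
        rcases hABi.lt_or_eq with h | h
        · exact h
        · exfalso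
          have h0 : osc g (Icc (A i) (B i)) = 0 := by
            rw [← h, Set.Icc_self, osc_singleton]
          linarith
      -- pick a pair near the supremum
      have hne : ((fun p : ℝ × ℝ => ‖g p.1 - g p.2‖) ''
          (Icc (A i) (B i) ×ˢ Icc (A i) (B i))).Nonempty :=
        ⟨_, ⟨(A i, A i), ⟨⟨le_rfl, hABi⟩, ⟨le_rfl, hABi⟩⟩, rfl⟩⟩
      obtain ⟨r, ⟨⟨x0, y0⟩, ⟨hx0, hy0⟩, rfl⟩, hr⟩ :=
        exists_lt_of_lt_csSup hne
          (show osc g (Icc (A i) (B i)) - κ / 2 < osc g (Icc (A i) (B i)) by linarith)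
      -- move the pair into the open interval by density
      have hWopen : IsOpen {p : ℝ × ℝ | osc g (Icc (A i) (B i)) - κ < ‖g p.1 - g p.2‖} :=
        isOpen_lt continuous_const (by fun_prop)
      have hmemcl : ((x0, y0) : ℝ × ℝ) ∈
          closure (Ioo (A i) (B i) ×ˢ Ioo (A i) (B i)) := by
        rw [closure_prod_eq, closure_Ioo hABlt.ne]
        exact ⟨hx0, hy0⟩
      obtain ⟨⟨x1, y1⟩, hpo, hx1, hy1⟩ :=
        _root_.mem_closure_iff.1 hmemcl _ hWopen
          (by simp only [mem_setOf_eq]; linarith)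
      obtain ⟨u', hu'fj, hu'ρ, hu'Ioo⟩ := approx i x1 hx1
      obtain ⟨v', hv'fj, hv'ρ, hv'Ioo⟩ := approx i y1 hy1
      have hminmem : min u' v' ∈ f j := by
        rcases le_total u' v' with h | h
        · rwa [min_eq_left h]
        · rwa [min_eq_right h]
      have hmaxmem : max u' v' ∈ f j := by
        rcases le_total u' v' with h | h
        · rwa [max_eq_right h]
        · rwa [max_eq_left h]
      have hminIoo : min u' v' ∈ Ioo (A i) (B i) := by
        rcases le_total u' v' with h | h
        · rwa [min_eq_left h]
        · rwa [min_eq_right h]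
      have hmaxIoo : max u' v' ∈ Ioo (A i) (B i) := by
        rcases le_total u' v' with h | h
        · rwa [max_eq_right h]
        · rwa [max_eq_left h]
      refine ⟨(min u' v', max u' v'), fun _ => ⟨hminmem, hmaxmem, min_le_max, ?_, ?_⟩⟩
      · intro t ht
        exact ⟨lt_of_lt_of_le hminIoo.1 ht.1, lt_of_le_of_lt ht.2 hmaxIoo.2⟩
      · have h1 : osc g (Icc (A i) (B i)) - κ < ‖g x1 - g y1‖ := hpo
        have e1 : ‖g x1 - g u'‖ < κ :=
          hρUC x1 (hIoo_sub (hIooAB i hx1)) u' (hfsub j hu'fj) hu'ρ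
        have e2 : ‖g y1 - g v'‖ < κ :=
          hρUC y1 (hIoo_sub (hIooAB i hy1)) v' (hfsub j hv'fj) hv'ρ
        have e2' : ‖g v' - g y1‖ < κ := by rwa [norm_sub_rev]
        have htri : ‖g x1 - g y1‖ ≤ ‖g x1 - g u'‖ + ‖g u' - g v'‖ + ‖g v' - g y1‖ := by
          have := dist_triangle4 (g x1) (g u') (g v') (g y1)
          simpa [dist_eq_norm] using this
        have h3 : ‖g u' - g v'‖ ≤ osc g (Icc (min u' v') (max u' v')) :=
          norm_le_osc hg isCompact_Icc ⟨min_le_left _ _, le_max_left _ _⟩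
            ⟨min_le_right _ _, le_max_right _ _⟩
        linarith
    choose p hp using key
    set m' := T.card with hm'
    set e := T.orderIsoOfFin rfl with he
    set U : Fin m' → ℝ := fun k => (p (e k)).1 with hU
    set V : Fin m' → ℝ := fun k => (p (e k)).2 with hV
    have hpk : ∀ k : Fin m', (p (e k)).1 ∈ f j ∧ (p (e k)).2 ∈ f j ∧
        (p (e k)).1 ≤ (p (e k)).2 ∧
        Icc (p (e k)).1 (p (e k)).2 ⊆ Ioo (A (e k)) (B (e k)) ∧
        osc g (Icc (A (e k)) (B (e k))) ≤ osc g (Icc (p (e k)).1 (p (e k)).2) + 3 * κ :=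
      fun k => hp (e k) (e k).2
    have hUV_Ioo : ∀ k : Fin m', U k ∈ Ioo (A (e k)) (B (e k)) ∧
        V k ∈ Ioo (A (e k)) (B (e k)) := by
      intro k
      obtain ⟨_, _, h3, h4, _⟩ := hpk k
      exact ⟨h4 ⟨le_rfl, h3⟩, h4 ⟨h3, le_rfl⟩⟩
    have hmain : (∑ k : Fin m', osc g (Icc (U k) (V k))) < ε / 2 := by
      apply H m' U V
      · intro k
        obtain ⟨h1, h2, h3, _, _⟩ := hpk k
        exact ⟨h3, h1, h2⟩
      · intro k l hkl
        have hkl' : ((e k : Fin m)) ≠ (e l : Fin m) := by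
          intro h
          exact hkl (e.injective (Subtype.ext h))
        obtain ⟨hUk, hVk⟩ := hUV_Ioo k
        obtain ⟨hUl, hVl⟩ := hUV_Ioo l
        rcases hNO _ _ hkl' with h | h
        · left; linarith [hVk.2, hUl.1]
        · right; linarith [hVl.2, hUk.1]
      · -- sum of lengths
        have hlen : ∀ i ∈ T, (p i).2 - (p i).1 ≤ B i - A i := by
          intro i hi
          obtain ⟨_, _, h3, h4, _⟩ := hp i hi
          have h5 := h4 ⟨le_rfl, h3⟩
          have h6 := h4 ⟨h3, le_rfl⟩
          have := h5.1; have := h6.2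
          linarith [h5.1, h6.2]
        calc (∑ k : Fin m', (V k - U k))
            = ∑ i ∈ T, ((p i).2 - (p i).1) := by
              rw [← Finset.sum_coe_sort T (fun i => (p i).2 - (p i).1)]
              exact Equiv.sum_comp e.toEquiv (fun i : T => (p (i : Fin m)).2 - (p (i : Fin m)).1)
          _ ≤ ∑ i ∈ T, (B i - A i) := Finset.sum_le_sum hlen
          _ ≤ ∑ i : Fin m, (B i - A i) := by
              apply Finset.sum_le_sum_of_subset_of_nonneg (Finset.subset_univ T)
              intro i _ _
              linarith [(hAB i).1]
          _ < δ := hsum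
    -- put everything together
    have hsplit : (∑ i : Fin m, osc g (Icc (A i) (B i)))
        = ∑ i ∈ T, osc g (Icc (A i) (B i))
          + ∑ i ∈ Finset.univ.filter (fun i => ¬ 2 * κ < osc g (Icc (A i) (B i))),
              osc g (Icc (A i) (B i)) :=
      (Finset.sum_filter_add_sum_filter_not Finset.univ _ _).symm
    have hbig : ∑ i ∈ T, osc g (Icc (A i) (B i))
        ≤ (∑ k : Fin m', osc g (Icc (U k) (V k))) + 3 * κ * T.card := by
      have h1 : ∑ i ∈ T, osc g (Icc (A i) (B i))
          ≤ ∑ i ∈ T, (osc g (Icc (p i).1 (p i).2) + 3 * κ) := by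
        apply Finset.sum_le_sum
        intro i hi
        exact (hp i hi).2.2.2.2
      have h2 : ∑ i ∈ T, (osc g (Icc (p i).1 (p i).2) + 3 * κ)
          = (∑ i ∈ T, osc g (Icc (p i).1 (p i).2)) + 3 * κ * T.card := by
        rw [Finset.sum_add_distrib, Finset.sum_const, nsmul_eq_mul]
        ring
      have h3 : (∑ i ∈ T, osc g (Icc (p i).1 (p i).2))
          = ∑ k : Fin m', osc g (Icc (U k) (V k)) := by
        rw [← Finset.sum_coe_sort T (fun i => osc g (Icc (p i).1 (p i).2))]
        exact (Equiv.sum_comp e.toEquiv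
          (fun i : T => osc g (Icc (p (i : Fin m)).1 (p (i : Fin m)).2))).symm
      linarith
    have hsmall : ∑ i ∈ Finset.univ.filter
          (fun i => ¬ 2 * κ < osc g (Icc (A i) (B i))), osc g (Icc (A i) (B i))
        ≤ 2 * κ * (Finset.univ.filter
          (fun i => ¬ 2 * κ < osc g (Icc (A i) (B i)))).card := by
      calc _ ≤ ∑ _i ∈ Finset.univ.filter
            (fun i => ¬ 2 * κ < osc g (Icc (A i) (B i))), 2 * κ := by
            apply Finset.sum_le_sum
            intro i hi
            rw [Finset.mem_filter] at hi
            exact le_of_not_gt hi.2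
        _ = _ := by rw [Finset.sum_const, nsmul_eq_mul]; ring
    have hcards : T.card + (Finset.univ.filter
        (fun i => ¬ 2 * κ < osc g (Icc (A i) (B i)))).card = m := by
      rw [hT, Finset.card_filter_add_card_filter_not, Finset.card_univ,
        Fintype.card_fin]
    have hκε : κ * (8 * (m + 1)) = ε := by
      rw [hκdef]; field_simp
    have hcard1 : (T.card : ℝ) ≤ m := by
      exact_mod_cast Nat.le_of_add_right_le hcards.le
    have hcard2 : ((Finset.univ.filter
        (fun i => ¬ 2 * κ < osc g (Icc (A i) (B i)))).card : ℝ) ≤ m := by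
      have h := hcards
      have : (Finset.univ.filter
          (fun i => ¬ 2 * κ < osc g (Icc (A i) (B i)))).card ≤ m := by omega
      exact_mod_cast this
    have herr : 3 * κ * T.card + 2 * κ * (Finset.univ.filter
        (fun i => ¬ 2 * κ < osc g (Icc (A i) (B i)))).card ≤ 3 * κ * m := by
      have h1 : (T.card : ℝ) + ((Finset.univ.filter
          (fun i => ¬ 2 * κ < osc g (Icc (A i) (B i)))).card : ℝ) = m := by
        exact_mod_cast hcards
      nlinarith [hκ.le, (Finset.univ.filter
        (fun i => ¬ 2 * κ < osc g (Icc (A i) (B i)))).card.cast_nonneg (α := ℝ)]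
    have hfinal : 3 * κ * m < ε / 2 := by
      have hm : (0:ℝ) ≤ m := Nat.cast_nonneg m
      nlinarith [hκε, hκ]
    linarith
  refine ⟨c, d, hcd, hIoo_sub, hACstar, ?_⟩
  -- locally absolutely continuous
  intro x' y' hxy hsubIcc ε hε
  obtain ⟨δ, hδ, H⟩ := hACstar ε hε
  refine ⟨δ, hδ, fun m A B hAB hNO hs => ?_⟩
  have hterm : ∀ i, ‖g (B i) - g (A i)‖ ≤ osc g (Icc (A i) (B i)) := fun i =>
    norm_le_osc hg isCompact_Icc (right_mem_Icc.2 (hAB i).1) (left_mem_Icc.2 (hAB i).1)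
  calc (∑ i, ‖g (B i) - g (A i)‖)
      ≤ ∑ i, osc g (Icc (A i) (B i)) := Finset.sum_le_sum fun i _ => hterm i
    _ < ε := by
        apply H m A B _ hNO hs
        intro i
        refine ⟨(hAB i).1, hsubIcc ((hAB i).2 (left_mem_Icc.2 (hAB i).1)),
          hsubIcc ((hAB i).2 (right_mem_Icc.2 (hAB i).1))⟩
end

section
/- If x : I → ℝⁿ is ACG* on an interval I and satisfies ẋ(t) ∈ F(x(t),t) a.e. on I, then for every subinterval J ⊆ I there exists an open subinterval H ⊆ J such that x restricted to H is locally absolutely continuous (and satisfies the inclusion a.e. on H). -/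
open Set MeasureTheory Filter Matrix

lemma norm_le_osc_s15 {n : ℕ} (x : ℝ → (Fin n → ℝ)) (I : Set ℝ) (hx : ContinuousOn x I)
    {u v : ℝ} (hsub : Set.Icc u v ⊆ I) {p q : ℝ}
    (hp : p ∈ Set.Icc u v) (hq : q ∈ Set.Icc u v) :
    ‖x p - x q‖ ≤ osc x (Set.Icc u v) := by
  apply le_csSup
  · have hK : IsCompact ((Set.Icc u v) ×ˢ (Set.Icc u v)) := isCompact_Icc.prod isCompact_Icc
    have hc : ContinuousOn (fun r : ℝ × ℝ => ‖x r.1 - x r.2‖)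
        ((Set.Icc u v) ×ˢ (Set.Icc u v)) := by
      apply ContinuousOn.norm
      exact ((hx.mono hsub).comp continuousOn_fst (fun r hr => hr.1)).sub
        ((hx.mono hsub).comp continuousOn_snd (fun r hr => hr.2))
    exact (hK.image_of_continuousOn hc).bddAbove
  · exact ⟨(p, q), ⟨hp, hq⟩, rfl⟩

lemma ac_of_dense {n : ℕ} (x : ℝ → (Fin n → ℝ)) (I S E : Set ℝ)
    (hx : ContinuousOn x I) (hS : ACStarOn x S) (hES : E ⊆ S) (hEI : E ⊆ I)
    (c d : ℝ) (hcd : Set.Ioo c d ⊆ closure E) (hIooI : Set.Ioo c d ⊆ I) :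
    LACOn x (Set.Ioo c d) := by
  intro a b hab hsub ε hε
  obtain ⟨δ, hδ, hAC⟩ := hS (ε / 2) (by positivity)
  refine ⟨δ, hδ, ?_⟩
  intro m A B hAB hno hlen
  set ε' : ℝ := ε / (4 * (m + 1)) with hε'def
  have hε' : 0 < ε' := by positivity
  -- choice of approximating points
  have hch : ∀ i : Fin m, ∃ p : ℝ × ℝ, A i < B i →
      p.1 ∈ E ∧ p.2 ∈ E ∧ A i < p.1 ∧ p.1 < p.2 ∧ p.2 < B i ∧
      ‖x p.1 - x (A i)‖ < ε' ∧ ‖x (B i) - x p.2‖ < ε' := by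
    intro i
    by_cases hi : A i < B i
    · have hIccI : Set.Icc (A i) (B i) ⊆ Set.Ioo c d := (hAB i).2.trans hsub
      have hAI : A i ∈ I := hIooI (hIccI ⟨le_refl _, hi.le⟩)
      have hBI : B i ∈ I := hIooI (hIccI ⟨hi.le, le_refl _⟩)
      have hca : ContinuousWithinAt x I (A i) := hx _ hAI
      have hcb : ContinuousWithinAt x I (B i) := hx _ hBI
      rw [Metric.continuousWithinAt_iff] at hca hcb
      obtain ⟨θ₁, hθ₁, hth1⟩ := hca ε' hε'
      obtain ⟨θ₂, hθ₂, hth2⟩ := hcb ε' hε'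
      set mid := (A i + B i) / 2 with hmid
      have hAm : A i < mid := by simp only [hmid]; linarith
      have hmB : mid < B i := by simp only [hmid]; linarith
      -- pick p1 near A i
      have hU1 : Set.Ioo (A i) (min (A i + θ₁) mid) ⊆ Set.Ioo c d := by
        intro t ht
        exact hIccI ⟨ht.1.le, (ht.2.trans_le (min_le_right _ _)).le.trans hmB.le⟩
      have hU1ne : A i < min (A i + θ₁) mid := lt_min (by linarith) hAm
      have h1 : (Set.Ioo (A i) (min (A i + θ₁) mid) ∩ E).Nonempty := by
        have hu : (A i + min (A i + θ₁) mid) / 2 ∈ Set.Ioo (A i) (min (A i + θ₁) mid) :=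
          ⟨by linarith, by linarith⟩
        have := hcd (hU1 hu)
        rw [mem_closure_iff] at this
        exact this _ isOpen_Ioo hu
      obtain ⟨p1, hp1U, hp1E⟩ := h1
      have hU2 : Set.Ioo (max (B i - θ₂) mid) (B i) ⊆ Set.Ioo c d := by
        intro t ht
        exact hIccI ⟨(hAm.le.trans (le_max_right _ _)).trans ht.1.le, ht.2.le⟩
      have hU2ne : max (B i - θ₂) mid < B i := max_lt (by linarith) hmB
      have h2 : (Set.Ioo (max (B i - θ₂) mid) (B i) ∩ E).Nonempty := by
        have hu : (max (B i - θ₂) mid + B i) / 2 ∈ Set.Ioo (max (B i - θ₂) mid) (B i) :=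
          ⟨by linarith, by linarith⟩
        have := hcd (hU2 hu)
        rw [mem_closure_iff] at this
        exact this _ isOpen_Ioo hu
      obtain ⟨p2, hp2U, hp2E⟩ := h2
      refine ⟨(p1, p2), fun _ => ⟨hp1E, hp2E, hp1U.1, ?_, hp2U.2, ?_, ?_⟩⟩
      · exact lt_trans (hp1U.2.trans_le (min_le_right _ _)) ((le_max_right _ _).trans_lt hp2U.1)
      · have : dist (x p1) (x (A i)) < ε' := by
          apply hth1 (hEI hp1E)
          rw [Real.dist_eq, abs_lt]
          constructor
          · linarith [hp1U.1]
          · linarith [hp1U.2.trans_le (min_le_left _ _)]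
        simpa [dist_eq_norm] using this
      · have : dist (x p2) (x (B i)) < ε' := by
          apply hth2 (hEI hp2E)
          rw [Real.dist_eq, abs_lt]
          constructor
          · linarith [(le_max_left _ _).trans_lt hp2U.1]
          · linarith [hp2U.2]
        have h' : ‖x (B i) - x p2‖ = dist (x p2) (x (B i)) := by
          rw [dist_eq_norm, norm_sub_rev]
        rw [h']; exact this
    · exact ⟨(0, 0), fun h => absurd h hi⟩
  choose g hg using hch
  set A' : Fin m → ℝ := fun i => (g i).1 with hA'
  set B' : Fin m → ℝ := fun i => (g i).2 with hB'
  classical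
  set s : Finset (Fin m) := Finset.univ.filter (fun i => A i < B i) with hs
  have hmem : ∀ i ∈ s, A i < B i := by intro i hi; simpa [hs] using hi
  set m' : ℕ := s.card with hm'
  have hcard : s.card = m' := rfl
  set e : Fin m' ≃o s := s.orderIsoOfFin hcard with he
  set A'' : Fin m' → ℝ := fun k => A' (e k) with hA''
  set B'' : Fin m' → ℝ := fun k => B' (e k) with hB''
  have hprops : ∀ i ∈ s, A' i ∈ E ∧ B' i ∈ E ∧ A i < A' i ∧ A' i < B' i ∧ B' i < B i ∧
      ‖x (A' i) - x (A i)‖ < ε' ∧ ‖x (B i) - x (B' i)‖ < ε' := fun i hi => hg i (hmem i hi)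
  have hsum_osc : (∑ k : Fin m', osc x (Set.Icc (A'' k) (B'' k))) < ε / 2 := by
    apply hAC m' A'' B''
    · intro k
      obtain ⟨h1, h2, _, h4, _, _, _⟩ := hprops (e k) (e k).2
      exact ⟨h4.le, hES h1, hES h2⟩
    · intro k l hkl
      have hne : ((e k : Fin m)) ≠ (e l : Fin m) := by
        intro h
        exact hkl (e.injective (Subtype.ext h))
      obtain ⟨_, _, hk3, hk4, hk5, _, _⟩ := hprops (e k) (e k).2
      obtain ⟨_, _, hl3, hl4, hl5, _, _⟩ := hprops (e l) (e l).2
      rcases hno _ _ hne with h | h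
      · left; exact hk5.le.trans (h.trans hl3.le)
      · right; exact hl5.le.trans (h.trans hk3.le)
    · calc (∑ k : Fin m', (B'' k - A'' k))
          = ∑ i ∈ s, (B' i - A' i) := by
            rw [← Finset.sum_attach s (fun i => B' i - A' i)]
            exact Fintype.sum_equiv e.toEquiv _ _ (fun k => rfl)
        _ ≤ ∑ i ∈ s, (B i - A i) := by
            apply Finset.sum_le_sum
            intro i hi
            obtain ⟨_, _, h3, _, h5, _, _⟩ := hprops i hi
            linarith
        _ ≤ ∑ i : Fin m, (B i - A i) := by
            apply Finset.sum_le_sum_of_subset_of_nonneg (Finset.subset_univ s)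
            intro i _ _
            linarith [(hAB i).1]
        _ < δ := hlen
  have hstep : ∀ i ∈ s, ‖x (B i) - x (A i)‖ ≤ osc x (Set.Icc (A' i) (B' i)) + 2 * ε' := by
    intro i hi
    obtain ⟨h1, h2, h3, h4, h5, h6, h7⟩ := hprops i hi
    have hIccI : Set.Icc (A' i) (B' i) ⊆ I := by
      intro t ht
      exact hIooI (((hAB i).2.trans hsub) ⟨h3.le.trans ht.1, ht.2.trans h5.le⟩)
    have hosc : ‖x (B' i) - x (A' i)‖ ≤ osc x (Set.Icc (A' i) (B' i)) :=
      norm_le_osc_s15 x I hx hIccI ⟨h4.le, le_refl _⟩ ⟨le_refl _, h4.le⟩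
    calc ‖x (B i) - x (A i)‖
        ≤ ‖x (B i) - x (B' i)‖ + ‖x (B' i) - x (A' i)‖ + ‖x (A' i) - x (A i)‖ := by
          have := norm_add₃_le (a := x (B i) - x (B' i)) (b := x (B' i) - x (A' i))
            (c := x (A' i) - x (A i))
          simpa using this
      _ ≤ osc x (Set.Icc (A' i) (B' i)) + 2 * ε' := by linarith
  calc (∑ i : Fin m, ‖x (B i) - x (A i)‖)
      = ∑ i ∈ s, ‖x (B i) - x (A i)‖ := by
        symm
        apply Finset.sum_subset (Finset.subset_univ s)
        intro i _ hi
        have : ¬ A i < B i := by simpa [hs] using hi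
        have : A i = B i := le_antisymm (hAB i).1 (not_lt.mp this)
        simp [this]
    _ ≤ ∑ i ∈ s, (osc x (Set.Icc (A' i) (B' i)) + 2 * ε') := Finset.sum_le_sum hstep
    _ = (∑ i ∈ s, osc x (Set.Icc (A' i) (B' i))) + s.card * (2 * ε') := by
        rw [Finset.sum_add_distrib, Finset.sum_const, nsmul_eq_mul]
    _ < ε / 2 + ε / 2 := by
        apply add_lt_add_of_lt_of_le
        · have : (∑ i ∈ s, osc x (Set.Icc (A' i) (B' i)))
              = ∑ k : Fin m', osc x (Set.Icc (A'' k) (B'' k)) := by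
            rw [← Finset.sum_attach s (fun i => osc x (Set.Icc (A' i) (B' i)))]
            exact (Fintype.sum_equiv e.toEquiv _ _ (fun k => rfl)).symm
          rw [this]; exact hsum_osc
        · have hcard_le : (s.card : ℝ) ≤ m := by
            exact_mod_cast Finset.card_le_univ s |>.trans (by simp)
          have : (s.card : ℝ) * (2 * ε') ≤ m * (2 * ε') := by
            apply mul_le_mul_of_nonneg_right hcard_le; positivity
          refine this.trans ?_
          have h4 : ε' * (4 * ((m:ℝ) + 1)) = ε := by
            rw [hε'def]
            field_simp
          nlinarith [hε'.le, (Nat.cast_nonneg m : (0:ℝ) ≤ m)]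
    _ = ε := by ring

theorem stmt_15 {n : ℕ} (F : (Fin n → ℝ) → ℝ → Set (Fin n → ℝ))
    (I : Set ℝ) (hI : I.OrdConnected) (hIne : MeasureTheory.volume I ≠ 0)
    (hInn : I ⊆ Set.Ici (0:ℝ))
    (x : ℝ → (Fin n → ℝ)) (hacg : ACGStarOn x I)
    (hsol : ∀ᵐ t ∂(MeasureTheory.volume.restrict I),
      ∃ d : Fin n → ℝ, HasDerivAt x d t ∧ d ∈ F (x t) t)
    (J : Set ℝ) (hJI : J ⊆ I) (hJ : J.OrdConnected)
    (hJne : MeasureTheory.volume J ≠ 0) :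
    ∃ c d : ℝ, c < d ∧ Set.Ioo c d ⊆ J ∧
      LACOn x (Set.Ioo c d) ∧
      ∀ᵐ t ∂(MeasureTheory.volume.restrict (Set.Ioo c d)),
        ∃ e : Fin n → ℝ, HasDerivAt x e t ∧ e ∈ F (x t) t := by
  obtain ⟨hxcont, f, hIf, hfAC⟩ := hacg
  -- J contains a nondegenerate closed interval
  have hJnt : ∃ p q, p ∈ J ∧ q ∈ J ∧ p < q := by
    by_contra h
    push_neg at h
    have hsub : J.Subsingleton := by
      intro p hp q hq
      rcases lt_trichotomy p q with h' | h' | h'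
      · exact absurd h' (not_lt.mpr (h p q hp hq))
      · exact h'
      · exact absurd h' (not_lt.mpr (h q p hq hp))
    exact hJne (hsub.measure_zero volume)
  obtain ⟨p, q, hp, hq, hpq⟩ := hJnt
  have hIccJ : Set.Icc p q ⊆ J := hJ.out hp hq
  -- Baire category
  set g : ℕ → Set ℝ := fun k => Nat.rec (Set.Iic p ∪ Set.Ici q)
    (fun j _ => closure (f j ∩ Set.Icc p q)) k with hgdef
  have hgc : ∀ k, IsClosed (g k) := by
    intro k
    cases k with
    | zero => exact isClosed_Iic.union isClosed_Ici
    | succ j => exact isClosed_closure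
  have hgU : (⋃ k, g k) = Set.univ := by
    apply Set.eq_univ_of_forall
    intro t
    by_cases ht : t ∈ Set.Ioo p q
    · have htI : t ∈ I := hJI (hIccJ (Set.Ioo_subset_Icc_self ht))
      rw [hIf] at htI
      obtain ⟨_, ⟨j, rfl⟩, htj⟩ := htI
      exact Set.mem_iUnion.mpr ⟨j + 1, subset_closure ⟨htj, Set.Ioo_subset_Icc_self ht⟩⟩
    · refine Set.mem_iUnion.mpr ⟨0, ?_⟩
      simp only [Set.mem_Ioo, not_and_or, not_lt] at ht
      rcases ht with h | h
      · exact Or.inl h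
      · exact Or.inr h
  have hdense := dense_iUnion_interior_of_closed hgc hgU
  obtain ⟨t, ht, htU⟩ := hdense.exists_mem_open isOpen_Ioo (Set.nonempty_Ioo.mpr hpq)
  obtain ⟨_, ⟨k, rfl⟩, htk⟩ := ht
  cases k with
  | zero =>
      exfalso
      have := interior_subset htk
      rcases this with h | h
      · exact absurd htU.1 (not_lt.mpr h)
      · exact absurd htU.2 (not_lt.mpr h)
  | succ j =>
      have hopen : IsOpen (interior (g (j+1)) ∩ Set.Ioo p q) :=
        isOpen_interior.inter isOpen_Ioo
      have htmem : t ∈ interior (g (j+1)) ∩ Set.Ioo p q := ⟨htk, htU⟩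
      obtain ⟨c, d, hcd, hsub⟩ := mem_nhds_iff_exists_Ioo_subset.mp
        (hopen.mem_nhds htmem)
      refine ⟨c, d, hcd.1.trans hcd.2, ?_, ?_, ?_⟩
      · intro s hs
        exact hIccJ (Set.Ioo_subset_Icc_self (hsub hs).2)
      · have hE : Set.Ioo c d ⊆ closure (f j ∩ Set.Icc p q) := by
          intro s hs
          exact interior_subset (hsub hs).1
        apply ac_of_dense x I (f j) (f j ∩ Set.Icc p q) hxcont (hfAC j)
          Set.inter_subset_left
          (fun s hs => hJI (hIccJ hs.2)) c d hE
        intro s hs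
        exact hJI (hIccJ (Set.Ioo_subset_Icc_self (hsub hs).2))
      · apply ae_restrict_of_ae_restrict_of_subset _ hsol
        intro s hs
        exact hJI (hIccJ (Set.Ioo_subset_Icc_self (hsub hs).2))
end

section
/- Let h₁(z,t) = 4z/(T−t) and h₂(z,t) = 2z/(T−t)² + z/(T−t)⁴ for t ∈ [0,T). Then for any t₀ ∈ [0,T) and x₀ ∈ ℝ², the function x(t) = M(T−t)M(T−t₀)⁻¹x₀, with M(τ) = [[τ³ sin(1/τ), τ³ cos(1/τ)], [τ² sin(1/τ) + τ cos(1/τ), τ² cos(1/τ) − τ sin(1/τ)]], satisfies ẋ₁ = −h₁(x₁,t) + x₂ and ẋ₂ = −h₂(x₁,t) on [t₀,T), and x(t) → 0 as t → T. -/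
/-
The solution is `x t = M (T - t) *ᵥ c` with `c = (M (T - t₀))⁻¹ *ᵥ x₀`. In `τ = T - t` its
coordinates are `τ³ oscSin c τ` and `τ² oscSin c τ + τ oscCos c τ`, where the bounded oscillating
factors satisfy `oscSin' = -oscCos / τ²` and `oscCos' = oscSin / τ²`; the system follows by the
chain rule. Every entry of `M τ` is a positive power of `τ` times a bounded factor, so `M τ → 0`.
-/

open Matrix Real Set Filter Topology

noncomputable def h₁ (T z t : ℝ) : ℝ := 4 * z / (T - t)

noncomputable def h₂ (T z t : ℝ) : ℝ := 2 * z / (T - t)^2 + z / (T - t)^4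

noncomputable def oscSin (c : Fin 2 → ℝ) (τ : ℝ) : ℝ := sin τ⁻¹ * c 0 + cos τ⁻¹ * c 1

noncomputable def oscCos (c : Fin 2 → ℝ) (τ : ℝ) : ℝ := cos τ⁻¹ * c 0 - sin τ⁻¹ * c 1

section Oscillation

variable (c : Fin 2 → ℝ) {τ : ℝ}

theorem hasDerivAt_oscSin (hτ : τ ≠ 0) : HasDerivAt (oscSin c) (-oscCos c τ / τ ^ 2) τ := by
  have hinv := hasDerivAt_inv hτ
  refine ((hinv.sin.mul_const (c 0)).add (hinv.cos.mul_const (c 1))).congr_deriv ?_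
  simp only [oscCos]
  ring

theorem hasDerivAt_oscCos (hτ : τ ≠ 0) : HasDerivAt (oscCos c) (oscSin c τ / τ ^ 2) τ := by
  have hinv := hasDerivAt_inv hτ
  refine ((hinv.cos.mul_const (c 0)).sub (hinv.sin.mul_const (c 1))).congr_deriv ?_
  simp only [oscSin]
  ring

theorem M_mulVec_zero : (M τ *ᵥ c) 0 = τ ^ 3 * oscSin c τ := by
  simp only [M, one_div, mulVec, dotProduct, Fin.sum_univ_two, of_apply, cons_val', cons_val_zero,
    cons_val_one, cons_val_fin_one, oscSin]
  ring

theorem M_mulVec_one : (M τ *ᵥ c) 1 = τ ^ 2 * oscSin c τ + τ * oscCos c τ := by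
  simp only [M, one_div, mulVec, dotProduct, Fin.sum_univ_two, of_apply, cons_val', cons_val_zero,
    cons_val_one, cons_val_fin_one, oscSin, oscCos]
  ring

theorem hasDerivAt_M_mulVec_zero (hτ : τ ≠ 0) :
    HasDerivAt (fun σ => (M σ *ᵥ c) 0) (3 * τ ^ 2 * oscSin c τ - τ * oscCos c τ) τ := by
  simp only [M_mulVec_zero]
  refine ((hasDerivAt_pow 3 τ).mul (hasDerivAt_oscSin c hτ)).congr_deriv ?_
  field_simp
  ring

theorem hasDerivAt_M_mulVec_one (hτ : τ ≠ 0) :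
    HasDerivAt (fun σ => (M σ *ᵥ c) 1) (2 * τ * oscSin c τ + oscSin c τ / τ) τ := by
  simp only [M_mulVec_one]
  refine (((hasDerivAt_pow 2 τ).mul (hasDerivAt_oscSin c hτ)).add
    ((hasDerivAt_id' τ).mul (hasDerivAt_oscCos c hτ))).congr_deriv ?_
  field_simp
  ring

end Oscillation

theorem Filter.Tendsto.mul_sin {ι : Type*} {l : Filter ι} {f : ι → ℝ} (hf : Tendsto f l (𝓝 0))
    (g : ι → ℝ) : Tendsto (fun i => f i * sin (g i)) l (𝓝 0) :=
  hf.zero_mul_isBoundedUnder_le (isBoundedUnder_of ⟨1, fun _ => by simpa using abs_sin_le_one _⟩)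

theorem Filter.Tendsto.mul_cos {ι : Type*} {l : Filter ι} {f : ι → ℝ} (hf : Tendsto f l (𝓝 0))
    (g : ι → ℝ) : Tendsto (fun i => f i * cos (g i)) l (𝓝 0) :=
  hf.zero_mul_isBoundedUnder_le (isBoundedUnder_of ⟨1, fun _ => by simpa using abs_cos_le_one _⟩)

theorem tendsto_M_zero : Tendsto M (𝓝 0) (𝓝 0) := by
  have hpow (n : ℕ) (hn : n ≠ 0) : Tendsto (fun τ : ℝ => τ ^ n) (𝓝 0) (𝓝 0) := by
    simpa [zero_pow hn] using (continuous_pow n).tendsto (0 : ℝ)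
  refine tendsto_pi_nhds.2 fun i => tendsto_pi_nhds.2 fun j => ?_
  fin_cases i <;> fin_cases j <;>
    simp only [M, one_div, Fin.zero_eta, Fin.mk_one, Fin.isValue, of_apply, cons_val', cons_val_zero,
      cons_val_one, cons_val_fin_one, Matrix.zero_apply]
  · exact (hpow 3 three_ne_zero).mul_sin (·⁻¹)
  · exact (hpow 3 three_ne_zero).mul_cos (·⁻¹)
  · simpa using ((hpow 2 two_ne_zero).mul_sin (·⁻¹)).add ((hpow 1 one_ne_zero).mul_cos (·⁻¹))
  · simpa using ((hpow 2 two_ne_zero).mul_cos (·⁻¹)).sub ((hpow 1 one_ne_zero).mul_sin (·⁻¹))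

theorem stmt_16_general (T t₀ : ℝ)
    (x₀ : Fin 2 → ℝ) (x : ℝ → Fin 2 → ℝ)
    (hx : ∀ t, x t = (M (T - t) * (M (T - t₀))⁻¹) *ᵥ x₀) :
    (∀ t ∈ Set.Ico t₀ T,
      HasDerivAt (fun s => x s 0) (-(h₁ T (x t 0) t) + x t 1) t ∧
      HasDerivAt (fun s => x s 1) (-(h₂ T (x t 0) t)) t) ∧
    Tendsto x (nhdsWithin T (Set.Iio T)) (nhds 0) := by
  set c := (M (T - t₀))⁻¹ *ᵥ x₀
  obtain rfl : x = fun t => M (T - t) *ᵥ c := funext fun t => by rw [hx, ← mulVec_mulVec]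
  refine ⟨fun t ht => ?_, ?_⟩
  · have hτ : T - t ≠ 0 := (sub_pos.mpr ht.2).ne'
    constructor
    · refine ((hasDerivAt_M_mulVec_zero c hτ).comp_const_sub T t).congr_deriv ?_
      simp only [h₁, M_mulVec_zero, M_mulVec_one]
      field_simp
      ring
    · refine ((hasDerivAt_M_mulVec_one c hτ).comp_const_sub T t).congr_deriv ?_
      simp only [h₂, M_mulVec_zero]
      field_simp
  · have hsub : Tendsto (fun t => T - t) (𝓝[<] T) (𝓝 0) :=
      ((continuous_sub_left T).tendsto' T 0 (sub_self T)).mono_left nhdsWithin_le_nhds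
    have hmulVec : Tendsto (· *ᵥ c) (𝓝 (0 : Matrix (Fin 2) (Fin 2) ℝ)) (𝓝 0) :=
      (continuous_id.matrix_mulVec continuous_const).tendsto' 0 0 (zero_mulVec c)
    exact hmulVec.comp (tendsto_M_zero.comp hsub)

theorem stmt_16 (T t₀ : ℝ) (hT : 0 < T) (ht₀ : t₀ ∈ Set.Ico (0:ℝ) T)
    (x₀ : Fin 2 → ℝ) (x : ℝ → Fin 2 → ℝ)
    (hx : ∀ t, x t = (M (T - t) * (M (T - t₀))⁻¹) *ᵥ x₀) :
    (∀ t ∈ Set.Ico t₀ T,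
      HasDerivAt (fun s => x s 0) (-(h₁ T (x t 0) t) + x t 1) t ∧
      HasDerivAt (fun s => x s 1) (-(h₂ T (x t 0) t)) t) ∧
    Tendsto x (nhdsWithin T (Set.Iio T)) (nhds 0) :=
  stmt_16_general T t₀ x₀ x hx
end
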